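/- In the linear-quadratic coalition game, a two-country coalition {1, j} (with j ≠ 1) is a Nash equilibrium of the participation game if and only if: 2P_j ≥ P_1 (country j stays), 2P_1 ≥ P_j (country 1 stays), and for every k ∉ {1, j}, joining is not strictly profitable, which holds iff 2P_2 ≤ P_1 + P_j when j ≠ 2 (i.e., P_j ≥ 2P_2 − P_1). Consequently, with P_1 > P_2 > ... and 2P_2 > P_1, the coalition {1, j} is an equilibrium iff P_j ≥ max{P_1/2, 2P_2 − P_1}. -/

import Mathlib

section PairCoalition

variable {ι K : Type*} [LinearOrder ι] [Field K] [LinearOrder K] [IsStrictOrderedRing K]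

theorem le_two_mul_and_le_two_mul_iff {a b : K} (hba : b ≤ a) :
    (a ≤ 2 * b ∧ b ≤ 2 * a) ↔ a / 2 ≤ b :=
  ⟨fun h => by linarith [h.1], fun h => ⟨by linarith, by linarith⟩⟩

variable {P : ι → K} {i₀ i₁ : ι}

/-- With `i₀, i₁` the two largest countries, only `i₁` can be tempted to join `{i₀, j}`. -/
theorem forall_two_mul_le_add_iff (hP : Antitone P) (h01 : i₀ < i₁)
    (hsecond : ∀ k, k ≠ i₀ → i₁ ≤ k) (j : ι) :
    (∀ k, k ≠ i₀ → k ≠ j → 2 * P k ≤ P i₀ + P j) ↔ 2 * P i₁ - P i₀ ≤ P j := by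
  constructor
  · intro hout
    by_cases hj : j = i₁
    · subst hj
      linarith [hP h01.le]
    · linarith [hout i₁ h01.ne' (Ne.symm hj)]
  · intro hj k hk0 _
    linarith [hP (hsecond k hk0)]

theorem pair_equilibrium_iff (hP : Antitone P) (h01 : i₀ < i₁)
    (hsecond : ∀ k, k ≠ i₀ → i₁ ≤ k) (j : ι) :
    (P i₀ ≤ 2 * P j ∧ P j ≤ 2 * P i₀ ∧ ∀ k, k ≠ i₀ → k ≠ j → 2 * P k ≤ P i₀ + P j) ↔
      max (P i₀ / 2) (2 * P i₁ - P i₀) ≤ P j := by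
  have hj0 : P j ≤ P i₀ := by
    by_cases hj : j = i₀
    · rw [hj]
    · exact hP (h01.le.trans (hsecond j hj))
  rw [← and_assoc, le_two_mul_and_le_two_mul_iff hj0,
    forall_two_mul_le_add_iff hP h01 hsecond j, max_le_iff]

end PairCoalition

theorem Fin.mk_one_le_of_ne_mk_zero {n : ℕ} {h0 : 0 < n} (h1 : 1 < n) {k : Fin n}
    (hk : k ≠ ⟨0, h0⟩) : (⟨1, h1⟩ : Fin n) ≤ k :=
  Fin.mk_le_of_le_val (Nat.one_le_iff_ne_zero.mpr fun h => hk (Fin.ext h))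

-- Countries are indexed from `0`: `P ⟨0, _⟩` is the paper's `P₁`.
/-- Characterization of equilibrium two-country coalitions `{1, j}` (0-based:
`{0, j}`) when `2P₂ > P₁`: the coalition is an equilibrium of the participation
game iff `Pⱼ ≥ max{P₁/2, 2P₂ − P₁}`. -/
theorem stmt_11 (n : ℕ) (hn : 2 ≤ n) (P : Fin n → ℝ)
    (hanti : StrictAnti P)
    (j : Fin n) :
    ((2 * P j ≥ P ⟨0, by omega⟩)
      ∧ (2 * P ⟨0, by omega⟩ ≥ P j)
      ∧ (∀ k : Fin n, k ≠ ⟨0, by omega⟩ → k ≠ j →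
          ¬ (2 * P k > P ⟨0, by omega⟩ + P j)))
    ↔ P j ≥ max (P ⟨0, by omega⟩ / 2) (2 * P ⟨1, by omega⟩ - P ⟨0, by omega⟩) := by
  simpa only [ge_iff_le, gt_iff_lt, not_lt] using
    pair_equilibrium_iff hanti.antitone (Fin.mk_lt_mk.mpr zero_lt_one)
      (fun _ hk => Fin.mk_one_le_of_ne_mk_zero _ hk) j
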